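/- If the system is globally hypoelliptic at the Fourier coefficient level, then it is globally solvable at the Fourier coefficient level. -/

import Mathlib

open Real

/-- Euclidean norm of an integer vector `τ ∈ ℤ^m`. -/
noncomputable def eNormZ {m : ℕ} (τ : Fin m → ℤ) : ℝ :=
  Real.sqrt (∑ i, ((τ i : ℝ)) ^ 2)

/-- The weight `w(τ,j) = ‖τ‖^(1/σ) + j^(1/(2nμ))`. -/
noncomputable def wgt (m n : ℕ) (σ μ : ℝ) (τ : Fin m → ℤ) (j : ℕ) : ℝ :=
  eNormZ τ ^ (1 / σ) + (j : ℝ) ^ (1 / (2 * n * μ))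

/-- GS-decay: `|a(τ,j)| ≤ C exp(-ε w(τ,j))` for some `C, ε > 0`. -/
def GSDecay (m n : ℕ) (σ μ : ℝ) (a : (Fin m → ℤ) → ℕ → ℂ) : Prop :=
  ∃ C > 0, ∃ ε > 0, ∀ τ j, ‖a τ j‖ ≤ C * Real.exp (-ε * wgt m n σ μ τ j)

/-- GS-growth: for all `ε > 0` there is `C > 0` with `|a(τ,j)| ≤ C exp(ε w(τ,j))`. -/
def GSGrowth (m n : ℕ) (σ μ : ℝ) (a : (Fin m → ℤ) → ℕ → ℂ) : Prop :=
  ∀ ε > 0, ∃ C > 0, ∀ τ j, ‖a τ j‖ ≤ C * Real.exp (ε * wgt m n σ μ τ j)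

/-- Symbol of the operator `L_r = Q_r(D_t) + d_r P(x,D_x)`: `σ_r(τ,j) = Q_r(τ) + d_r λ_j`. -/
noncomputable def symb {m ℓ : ℕ} (Q : Fin ℓ → MvPolynomial (Fin m) ℂ)
    (d : Fin ℓ → ℂ) (lam : ℕ → ℝ) (r : Fin ℓ) (τ : Fin m → ℤ) (j : ℕ) : ℂ :=
  MvPolynomial.eval (fun i => ((τ i : ℂ))) (Q r) + d r * (lam j : ℂ)

/-- `‖σ(τ,j)‖ = max_{1 ≤ r ≤ ℓ} |σ_r(τ,j)|`. -/
noncomputable def symbNorm {m ℓ : ℕ} (Q : Fin ℓ → MvPolynomial (Fin m) ℂ)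
    (d : Fin ℓ → ℂ) (lam : ℕ → ℝ) (τ : Fin m → ℤ) (j : ℕ) : ℝ :=
  ⨆ r : Fin ℓ, ‖symb Q d lam r τ j‖

/-- The Diophantine condition (DC). -/
def DioCond (m n ℓ : ℕ) (σ μ : ℝ) (Q : Fin ℓ → MvPolynomial (Fin m) ℂ)
    (d : Fin ℓ → ℂ) (lam : ℕ → ℝ) : Prop :=
  ∀ ε > 0, ∃ C > 0, ∀ τ j, symbNorm Q d lam τ j ≠ 0 →
    symbNorm Q d lam τ j ≥ C * Real.exp (-ε * wgt m n σ μ τ j)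

/-- Global hypoellipticity at the Fourier coefficient level. -/
def GloballyHypoelliptic (m n ℓ : ℕ) (σ μ : ℝ) (Q : Fin ℓ → MvPolynomial (Fin m) ℂ)
    (d : Fin ℓ → ℂ) (lam : ℕ → ℝ) : Prop :=
  ∀ u : (Fin m → ℤ) → ℕ → ℂ, GSGrowth m n σ μ u →
    (∀ r : Fin ℓ, GSDecay m n σ μ (fun τ j => symb Q d lam r τ j * u τ j)) →
    GSDecay m n σ μ u

/-- Admissible families (compatibility conditions). -/
def Admissible {m ℓ : ℕ} (Q : Fin ℓ → MvPolynomial (Fin m) ℂ) (d : Fin ℓ → ℂ)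
    (lam : ℕ → ℝ) (f : Fin ℓ → (Fin m → ℤ) → ℕ → ℂ) : Prop :=
  (∀ r s τ j, symb Q d lam r τ j * f s τ j = symb Q d lam s τ j * f r τ j) ∧
  (∀ r τ j, symb Q d lam r τ j = 0 → f r τ j = 0)

/-- Global solvability at the Fourier coefficient level. -/
def GloballySolvable (m n ℓ : ℕ) (σ μ : ℝ) (Q : Fin ℓ → MvPolynomial (Fin m) ℂ)
    (d : Fin ℓ → ℂ) (lam : ℕ → ℝ) : Prop :=
  ∀ f : Fin ℓ → (Fin m → ℤ) → ℕ → ℂ, Admissible Q d lam f →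
    (∀ r, GSGrowth m n σ μ (f r)) →
    ∃ u : (Fin m → ℤ) → ℕ → ℂ, GSGrowth m n σ μ u ∧
      ∀ r τ j, symb Q d lam r τ j * u τ j = f r τ j

/-!
Global hypoellipticity forces the Diophantine condition: applied to the indicator `u` of the set
where `max_r |σ_r| ≤ exp (-ε w)`, which has GS-growth and makes every `σ_r u` decay, it shows that
this set is finite, so `max_r |σ_r|` is bounded below by a multiple of `exp (-ε w)` wherever it
does not vanish. Given an admissible family `f`, put `u := f_R / σ_R` where `R` picks the index
maximising `|σ_r|`: the Diophantine condition turns the GS-growth of the `f_r` into GS-growth of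
`u`, and the compatibility conditions give `σ_r u = f_r`.
-/

open Filter Topology

lemma Set.Finite.exists_pos_le {ι : Type*} {s : Set ι} (hs : s.Finite) {g : ι → ℝ}
    (hg : ∀ x ∈ s, 0 < g x) : ∃ c > 0, ∀ x ∈ s, c ≤ g x := by
  have hall : ∀ᶠ c in 𝓝[>] (0 : ℝ), ∀ x ∈ s, c ≤ g x :=
    (eventually_all_finite hs).2 fun x hx =>
      mem_of_superset (Ioo_mem_nhdsGT (hg x hx)) fun _ hc => hc.2.le
  exact (hall.and self_mem_nhdsWithin).exists.imp fun c hc => ⟨hc.2, hc.1⟩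

section Weight

lemma wgt_nonneg {m : ℕ} (n : ℕ) (σ μ : ℝ) (τ : Fin m → ℤ) (j : ℕ) : 0 ≤ wgt m n σ μ τ j :=
  add_nonneg (rpow_nonneg (sqrt_nonneg _) _) (rpow_nonneg j.cast_nonneg _)

variable {m n : ℕ} {σ μ : ℝ}

lemma abs_le_eNormZ (τ : Fin m → ℤ) (i : Fin m) : |(τ i : ℝ)| ≤ eNormZ τ := by
  rw [← sqrt_sq_eq_abs]
  exact sqrt_le_sqrt
    (Finset.single_le_sum (fun k _ => sq_nonneg (τ k : ℝ)) (Finset.mem_univ i))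

lemma le_rpow_of_rpow_one_div_le {x K z : ℝ} (hx : 0 ≤ x) (hz : 0 < z) (h : x ^ (1 / z) ≤ K) :
    x ≤ K ^ z := by
  rw [one_div] at h
  exact (rpow_inv_le_iff_of_pos hx ((rpow_nonneg hx _).trans h) hz).1 h

lemma finite_setOf_wgt_le (hσ : 0 < σ) (hnμ : 0 < 2 * (n : ℝ) * μ) (K : ℝ) :
    {p : (Fin m → ℤ) × ℕ | wgt m n σ μ p.1 p.2 ≤ K}.Finite := by
  let B : Fin m → ℤ := fun _ => ⌈K ^ σ⌉
  refine ((Set.finite_Icc (-B) B).prod (Set.finite_Iic ⌈K ^ (2 * (n : ℝ) * μ)⌉₊)).subset ?_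
  rintro ⟨τ, j⟩ (hp : wgt m n σ μ τ j ≤ K)
  have hτ : eNormZ τ ≤ K ^ σ := le_rpow_of_rpow_one_div_le (sqrt_nonneg _) hσ
    (le_of_add_le_of_nonneg_left hp (rpow_nonneg j.cast_nonneg _))
  have hj : (j : ℝ) ≤ K ^ (2 * (n : ℝ) * μ) := le_rpow_of_rpow_one_div_le j.cast_nonneg hnμ
    (le_of_add_le_of_nonneg_right hp (rpow_nonneg (sqrt_nonneg _) _))
  have hτi (i : Fin m) := abs_le.1 ((abs_le_eNormZ τ i).trans (hτ.trans (Int.le_ceil _)))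
  refine ⟨⟨fun i => ?_, fun i => ?_⟩, ?_⟩
  · exact_mod_cast (hτi i).1
  · exact_mod_cast (hτi i).2
  · exact_mod_cast hj.trans (Nat.le_ceil _)

end Weight

section Sequences

variable {m n : ℕ} {σ μ : ℝ}

lemma gsGrowth_of_norm_le {a : (Fin m → ℤ) → ℕ → ℂ} {C : ℝ} (h : ∀ τ j, ‖a τ j‖ ≤ C) :
    GSGrowth m n σ μ a := by
  intro ε hε
  refine ⟨max C 1, by positivity, fun τ j => ?_⟩
  have hw := wgt_nonneg n σ μ τ j
  calc ‖a τ j‖ ≤ max C 1 := (h τ j).trans (le_max_left _ _)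
    _ ≤ max C 1 * exp (ε * wgt m n σ μ τ j) :=
      le_mul_of_one_le_right (by positivity) (one_le_exp (by positivity))

lemma GSGrowth.select {ι : Type*} [Finite ι] {f : ι → (Fin m → ℤ) → ℕ → ℂ}
    (hf : ∀ i, GSGrowth m n σ μ (f i)) (R : (Fin m → ℤ) → ℕ → ι) :
    GSGrowth m n σ μ (fun τ j => f (R τ j) τ j) := by
  intro ε hε
  choose C hC0 hC using fun i => hf i ε hε
  obtain ⟨B, hB⟩ := (Set.finite_range C).bddAbove
  refine ⟨max B 1, by positivity, fun τ j => (hC _ τ j).trans ?_⟩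
  gcongr
  exact (hB (Set.mem_range_self _)).trans (le_max_left _ _)

lemma GSGrowth.div {a b : (Fin m → ℤ) → ℕ → ℂ} (ha : GSGrowth m n σ μ a)
    (hb : ∀ ε > 0, ∃ C > 0, ∀ τ j, b τ j ≠ 0 → C * exp (-ε * wgt m n σ μ τ j) ≤ ‖b τ j‖) :
    GSGrowth m n σ μ (fun τ j => a τ j / b τ j) := by
  intro ε hε
  obtain ⟨C₁, hC₁, ha⟩ := ha (ε / 2) (half_pos hε)
  obtain ⟨C₂, hC₂, hb⟩ := hb (ε / 2) (half_pos hε)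
  refine ⟨C₁ / C₂, by positivity, fun τ j => ?_⟩
  rcases eq_or_ne (b τ j) 0 with h0 | h0
  · simp only [h0, div_zero, norm_zero]
    positivity
  calc ‖a τ j / b τ j‖ = ‖a τ j‖ / ‖b τ j‖ := norm_div _ _
    _ ≤ C₁ * exp (ε / 2 * wgt m n σ μ τ j) / (C₂ * exp (-(ε / 2) * wgt m n σ μ τ j)) :=
      div_le_div₀ (by positivity) (ha τ j) (by positivity) (hb τ j h0)
    _ = C₁ / C₂ * exp (ε * wgt m n σ μ τ j) := by
      rw [mul_div_mul_comm, ← exp_sub]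
      ring_nf

lemma GSDecay.finite_setOf_le_norm (hσ : 0 < σ) (hnμ : 0 < 2 * (n : ℝ) * μ)
    {a : (Fin m → ℤ) → ℕ → ℂ} (ha : GSDecay m n σ μ a) {c : ℝ} (hc : 0 < c) :
    {p : (Fin m → ℤ) × ℕ | c ≤ ‖a p.1 p.2‖}.Finite := by
  obtain ⟨C, hC, ε, hε, ha⟩ := ha
  refine (finite_setOf_wgt_le hσ hnμ (log (C / c) / ε)).subset fun p (hp : c ≤ _) => ?_
  show wgt m n σ μ p.1 p.2 ≤ log (C / c) / ε
  rw [le_div_iff₀ hε, le_log_iff_exp_le (by positivity), le_div_iff₀ hc]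
  calc exp (wgt m n σ μ p.1 p.2 * ε) * c
      ≤ exp (wgt m n σ μ p.1 p.2 * ε) * (C * exp (-ε * wgt m n σ μ p.1 p.2)) := by
        gcongr
        exact hp.trans (ha _ _)
    _ = C := by
      rw [mul_left_comm, ← exp_add]
      ring_nf
      rw [exp_zero, mul_one]

end Sequences

section Symbols

variable {m ℓ : ℕ} (Q : Fin ℓ → MvPolynomial (Fin m) ℂ) (d : Fin ℓ → ℂ) (lam : ℕ → ℝ)

lemma norm_symb_le_symbNorm (r : Fin ℓ) (τ : Fin m → ℤ) (j : ℕ) :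
    ‖symb Q d lam r τ j‖ ≤ symbNorm Q d lam τ j :=
  le_ciSup (f := fun r => ‖symb Q d lam r τ j‖) (Set.finite_range _).bddAbove r

lemma symbNorm_nonneg (τ : Fin m → ℤ) (j : ℕ) : 0 ≤ symbNorm Q d lam τ j :=
  iSup_nonneg fun _ => norm_nonneg _

lemma exists_norm_symb_eq_symbNorm [Nonempty (Fin ℓ)] (τ : Fin m → ℤ) (j : ℕ) :
    ∃ r, ‖symb Q d lam r τ j‖ = symbNorm Q d lam τ j :=
  exists_eq_ciSup_of_finite

variable {Q d lam}

lemma Admissible.symb_mul_div {f : Fin ℓ → (Fin m → ℤ) → ℕ → ℂ} (hf : Admissible Q d lam f)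
    {r s : Fin ℓ} {τ : Fin m → ℤ} {j : ℕ} (hrs : ‖symb Q d lam r τ j‖ ≤ ‖symb Q d lam s τ j‖) :
    symb Q d lam r τ j * (f s τ j / symb Q d lam s τ j) = f r τ j := by
  rcases eq_or_ne (symb Q d lam s τ j) 0 with hs | hs
  · have hr : symb Q d lam r τ j = 0 := norm_le_zero_iff.1 (by simpa [hs] using hrs)
    rw [hr, zero_mul, hf.2 r τ j hr]
  · rw [mul_div_assoc', div_eq_iff hs, hf.1 r s τ j, mul_comm]

end Symbols

section Main

variable {m n ℓ : ℕ} {σ μ : ℝ} (Q : Fin ℓ → MvPolynomial (Fin m) ℂ) (d : Fin ℓ → ℂ)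
  (lam : ℕ → ℝ)

theorem dioCond_of_globallyHypoelliptic (hσ : 0 < σ) (hnμ : 0 < 2 * (n : ℝ) * μ)
    (hGH : GloballyHypoelliptic m n ℓ σ μ Q d lam) : DioCond m n ℓ σ μ Q d lam := by
  intro ε hε
  let S := {p : (Fin m → ℤ) × ℕ | symbNorm Q d lam p.1 p.2 ≤ exp (-ε * wgt m n σ μ p.1 p.2)}
  let u : (Fin m → ℤ) → ℕ → ℂ := fun τ j => S.indicator 1 (τ, j)
  have hu_growth : GSGrowth m n σ μ u :=
    gsGrowth_of_norm_le (C := 1) fun τ j => by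
      by_cases hp : (τ, j) ∈ S <;> simp [u, hp]
  have hsymb_u_decay (r : Fin ℓ) : GSDecay m n σ μ (fun τ j => symb Q d lam r τ j * u τ j) := by
    refine ⟨1, one_pos, ε, hε, fun τ j => ?_⟩
    by_cases hp : (τ, j) ∈ S
    · simpa [u, hp] using (norm_symb_le_symbNorm Q d lam r τ j).trans hp
    · simp only [u, Set.indicator_of_notMem hp, mul_zero, norm_zero]
      positivity
  have hS : S.Finite :=
    ((hGH u hu_growth hsymb_u_decay).finite_setOf_le_norm hσ hnμ one_pos).subset
      fun p hp => by simp [u, hp]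
  obtain ⟨c, hc, hcS⟩ := (hS.inter_of_left {p | symbNorm Q d lam p.1 p.2 ≠ 0}).exists_pos_le
    (g := fun p => symbNorm Q d lam p.1 p.2)
    fun p hp => (symbNorm_nonneg Q d lam p.1 p.2).lt_of_ne' hp.2
  refine ⟨min c 1, by positivity, fun τ j hne => ?_⟩
  have hw := wgt_nonneg n σ μ τ j
  by_cases hp : (τ, j) ∈ S
  · calc min c 1 * exp (-ε * wgt m n σ μ τ j) ≤ min c 1 :=
          mul_le_of_le_one_right (by positivity) (exp_le_one_iff.2 (by nlinarith))
      _ ≤ symbNorm Q d lam τ j := (min_le_left _ _).trans (hcS (τ, j) ⟨hp, hne⟩)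
  · calc min c 1 * exp (-ε * wgt m n σ μ τ j) ≤ 1 * exp (-ε * wgt m n σ μ τ j) := by
          gcongr
          exact min_le_right _ _
      _ ≤ symbNorm Q d lam τ j := (one_mul _).le.trans (le_of_not_ge hp)

theorem globallySolvable_of_dioCond [Nonempty (Fin ℓ)] (hDC : DioCond m n ℓ σ μ Q d lam) :
    GloballySolvable m n ℓ σ μ Q d lam := by
  intro f hf hf_growth
  choose R hR using exists_norm_symb_eq_symbNorm Q d lam
  refine ⟨fun τ j => f (R τ j) τ j / symb Q d lam (R τ j) τ j,
    (GSGrowth.select hf_growth R).div fun ε hε => ?_,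
    fun r τ j => hf.symb_mul_div ((norm_symb_le_symbNorm Q d lam r τ j).trans (hR τ j).ge)⟩
  obtain ⟨C, hC, hDC⟩ := hDC ε hε
  refine ⟨C, hC, fun τ j h0 => ?_⟩
  rw [hR τ j]
  exact hDC τ j (hR τ j ▸ norm_ne_zero_iff.2 h0)

end Main

theorem statement2_general (m n ℓ : ℕ) (hn : 1 ≤ n) (hℓ : 1 ≤ ℓ)
    (σ μ : ℝ) (hσ : 1 ≤ σ) (hμ : 1 / 2 ≤ μ)
    (Q : Fin ℓ → MvPolynomial (Fin m) ℂ) (d : Fin ℓ → ℂ) (lam : ℕ → ℝ)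
    (hGH : GloballyHypoelliptic m n ℓ σ μ Q d lam) :
    GloballySolvable m n ℓ σ μ Q d lam := by
  have : Nonempty (Fin ℓ) := ⟨⟨0, hℓ⟩⟩
  have hnμ : 0 < 2 * (n : ℝ) * μ := by
    have : (1 : ℝ) ≤ n := by exact_mod_cast hn
    have : 0 < μ := by linarith
    positivity
  exact globallySolvable_of_dioCond Q d lam
    (dioCond_of_globallyHypoelliptic Q d lam (by linarith) hnμ hGH)

/-- global hypoellipticity implies global solvability. -/
theorem statement2 (m n ℓ : ℕ) (hm : 1 ≤ m) (hn : 1 ≤ n) (hℓ : 1 ≤ ℓ)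
    (σ μ : ℝ) (hσ : 1 ≤ σ) (hμ : 1 / 2 ≤ μ)
    (Q : Fin ℓ → MvPolynomial (Fin m) ℂ) (d : Fin ℓ → ℂ) (lam : ℕ → ℝ)
    (hGH : GloballyHypoelliptic m n ℓ σ μ Q d lam) :
    GloballySolvable m n ℓ σ μ Q d lam :=
  statement2_general m n ℓ hn hℓ σ μ hσ hμ Q d lam hGH
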